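/- Let k ≥ 4 be even and ℓ ≥ 3 be odd, and set t = (k+ℓ-3)/2. Then H'(n,p,t+1), the graph obtained from K_t ∨ T_p(n-t) by adding one extra edge inside one class of the Turán part, is C_{k,ℓ}^{p+1}-free: the number of (p+1)-cliques of any potential copy of C_{k,ℓ}^{p+1} is at most 2(t-1)+3+1 = k+ℓ-1 < k+ℓ. -/

import Mathlib

open SimpleGraph

/-- The lollipop `C_{k,ℓ}`: a cycle on vertices `0,…,k-1` together with a pendant
path `0, k, k+1, …, k+ℓ-1` appended to the cycle vertex `0` (the *center*). -/
def lollipop (k l : ℕ) : SimpleGraph (Fin (k + l)) :=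
  SimpleGraph.fromRel (fun a b =>
    (b.val = a.val + 1 ∧ b.val < k) ∨ (a.val = 0 ∧ b.val = k - 1) ∨
    (a.val = 0 ∧ b.val = k) ∨ (b.val = a.val + 1 ∧ k ≤ a.val))

/-- The edge blow-up `H^{p+1}` of a graph `H`: each edge of `H` is replaced by a
clique of order `p+1`, the `p-1` new vertices of the cliques being all distinct. -/
def edgeBlowup {V : Type*} (H : SimpleGraph V) (p : ℕ) :
    SimpleGraph (V ⊕ (H.edgeSet × Fin (p - 1))) where
  Adj x y := match x, y with
    | .inl a, .inl b => H.Adj a b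
    | .inl a, .inr e => a ∈ (e.1 : Sym2 V)
    | .inr e, .inl a => a ∈ (e.1 : Sym2 V)
    | .inr e, .inr f => e.1 = f.1 ∧ e.2 ≠ f.2
  symm := ⟨by rintro (a | e) (b | f) h <;> simp_all <;> tauto⟩
  loopless := ⟨by rintro (a | e) h <;> simp_all⟩

/-- `A` is contained in `B` as a subgraph (there is an injective graph homomorphism). -/
def IsCont {α β : Type*} (A : SimpleGraph α) (B : SimpleGraph β) : Prop :=
  ∃ f : α → β, Function.Injective f ∧ ∀ ⦃a b⦄, A.Adj a b → B.Adj (f a) (f b)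

/-- The join `G ∨ H` of two graphs: all edges between the two graphs are added. -/
def gJoin {α β : Type*} (G : SimpleGraph α) (H : SimpleGraph β) : SimpleGraph (α ⊕ β) where
  Adj x y := match x, y with
    | .inl a, .inl b => G.Adj a b
    | .inr a, .inr b => H.Adj a b
    | .inl _, .inr _ => True
    | .inr _, .inl _ => True
  symm := ⟨by rintro (a | a) (b | b) h <;> first | exact h.symm | trivial⟩
  loopless := ⟨by rintro (a | a) h <;> first | exact G.loopless.irrefl _ h | exact H.loopless.irrefl _ h⟩

/-- The disjoint union of two graphs. -/
def dUnion {α β : Type*} (G : SimpleGraph α) (H : SimpleGraph β) : SimpleGraph (α ⊕ β) where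
  Adj x y := match x, y with
    | .inl a, .inl b => G.Adj a b
    | .inr a, .inr b => H.Adj a b
    | _, _ => False
  symm := ⟨by rintro (a | a) (b | b) h <;> first | exact h.symm | exact h⟩
  loopless := ⟨by rintro (a | a) h <;> first | exact G.loopless.irrefl _ h | exact H.loopless.irrefl _ h⟩

/-- `a` vertex-disjoint copies of the graph `G`. -/
def copies {β : Type*} (a : ℕ) (G : SimpleGraph β) : SimpleGraph (Fin a × β) where
  Adj x y := x.1 = y.1 ∧ G.Adj x.2 y.2
  symm := ⟨by rintro x y ⟨h1, h2⟩; exact ⟨h1.symm, h2.symm⟩⟩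
  loopless := ⟨by rintro x ⟨h1, h2⟩; exact G.loopless.irrefl _ h2⟩

/-- The complete multipartite graph `K_{p}(m,…,m)` with `p` parts of size `m`. -/
def completeMultipartite (p m : ℕ) : SimpleGraph (Fin p × Fin m) where
  Adj x y := x.1 ≠ y.1
  symm := ⟨fun _ _ h => h.symm⟩

/-- `H(n,p,q) = K_{q-1} ∨ T_p(n-q+1)`. -/
def Hgraph (n p q : ℕ) : SimpleGraph (Fin (q - 1) ⊕ Fin (n - (q - 1))) :=
  gJoin (completeGraph (Fin (q - 1))) (turanGraph (n - (q - 1)) p)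

/-- The number of edges of a graph. -/
noncomputable def numEdges {α : Type*} (G : SimpleGraph α) : ℕ := Nat.card G.edgeSet

/-- `E` (a graph on `n` vertices) is the unique extremal `H`-free graph on `n`
vertices: it is `H`-free, every `H`-free graph on `n` vertices has at most as many
edges, and any `H`-free graph attaining this maximum is isomorphic to `E`. -/
def UniqueExtremal {W α : Type*} (H : SimpleGraph W) (n : ℕ) (E : SimpleGraph α) : Prop :=
  ¬ IsCont H E ∧ Nat.card α = n ∧
    ∀ G : SimpleGraph (Fin n), ¬ IsCont H G →
      numEdges G ≤ numEdges E ∧ (numEdges G = numEdges E → Nonempty (G ≃g E))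

/-- The member of the family `𝒴_{k+1,ℓ+1}` obtained from the path `P_{k+1}`
(on `Fin (k+1)`) by appending a path `P_{ℓ+1}` to its vertex `j` (the branching
vertex), the appended path having the `ℓ` extra vertices `Fin l`. -/
def Ygraph (k l j : ℕ) : SimpleGraph (Fin (k + 1) ⊕ Fin l) :=
  SimpleGraph.fromRel (fun x y => match x, y with
    | .inl a, .inl b => b.val = a.val + 1
    | .inl a, .inr b => a.val = j ∧ b.val = 0
    | .inr a, .inr b => b.val = a.val + 1
    | _, _ => False)

/-- The graph obtained from `H` by splitting every vertex of `U`: each `v ∈ U`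
is replaced by `deg v` new vertices, one for each neighbor `w` of `v`, joined to
`w` only. -/
def splitGraph {V : Type*} (H : SimpleGraph V) (U : Set V) :
    SimpleGraph ({v : V // v ∉ U} ⊕ {p : V × V // p.1 ∈ U ∧ H.Adj p.1 p.2}) where
  Adj x y := match x, y with
    | .inl a, .inl b => H.Adj a.1 b.1
    | .inl a, .inr e => e.1.2 = a.1
    | .inr e, .inl a => e.1.2 = a.1
    | .inr _, .inr _ => False
  symm := ⟨by rintro (a | e) (b | f) h <;> first | exact h.symm | exact h⟩
  loopless := ⟨by rintro (a | e) h <;> simp_all⟩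

/-!
Every edge `e` of `H` becomes a `(p+1)`-clique `Q_e` of `H^{p+1}`, and two of these cliques share
at most one vertex. As `T_p(m)` is `p`-partite, the image of `Q_e` in `G ∨ T_p(m) + xy` either meets
the apex part `G` or contains both `x` and `y`, and the latter happens for at most one edge. An apex
vertex is the image of a single vertex `u` of the blow-up, and `u` lies in at most `deg u` of the
cliques: at most 3 for the centre of the lollipop, at most 2 for any other vertex, and 1 for a new
vertex. So `C_{k,ℓ}` would have at most `2t + 2 < k + ℓ` edges.
-/

section Lollipop

variable {k l : ℕ}

lemma lollipop_adj_val {v w : Fin (k + l)} (h : (lollipop k l).Adj v w) :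
    w.val ∈ (if v.val = 0 then {1, k - 1, k}
      else {if v.val = k - 1 then 0 else v.val + 1, if v.val = k then 0 else v.val - 1} :
        Finset ℕ) := by
  rw [lollipop, fromRel_adj] at h
  obtain ⟨hne, h⟩ := h
  have hne' : v.val ≠ w.val := fun h => hne (Fin.ext h)
  split_ifs <;> simp only [Finset.mem_insert, Finset.mem_singleton] <;> omega

lemma ncard_neighborSet_le_of_forall_adj_val_mem {n : ℕ} (G : SimpleGraph (Fin n)) (v : Fin n)
    (s : Finset ℕ) (h : ∀ w, G.Adj v w → w.val ∈ s) : (G.neighborSet v).ncard ≤ s.card := by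
  rw [← Set.ncard_coe_finset]
  exact Set.ncard_le_ncard_of_injOn Fin.val (fun w hw => h w hw) Fin.val_injective.injOn

lemma ncard_neighborSet_lollipop_le_two {v : Fin (k + l)} (hv : v.val ≠ 0) :
    ((lollipop k l).neighborSet v).ncard ≤ 2 := by
  refine (ncard_neighborSet_le_of_forall_adj_val_mem _ v
    {if v.val = k - 1 then 0 else v.val + 1, if v.val = k then 0 else v.val - 1}
      fun w hw => ?_).trans Finset.card_le_two
  simpa [hv] using lollipop_adj_val hw

lemma ncard_neighborSet_lollipop_le_three (v : Fin (k + l)) :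
    ((lollipop k l).neighborSet v).ncard ≤ 3 := by
  by_cases hv : v.val = 0
  · refine (ncard_neighborSet_le_of_forall_adj_val_mem _ v {1, k - 1, k} fun w hw => ?_).trans
      Finset.card_le_three
    simpa [hv] using lollipop_adj_val hw
  · exact (ncard_neighborSet_lollipop_le_two hv).trans (by norm_num)

lemma le_card_edgeSet_lollipop (hk : 3 ≤ k) : k + l ≤ Nat.card (lollipop k l).edgeSet := by
  let prev : Fin (k + l) → Fin (k + l) := fun j =>
    ⟨if j.val = 0 then k - 1 else if j.val = k then 0 else j.val - 1, by split_ifs <;> omega⟩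
  have hadj : ∀ j, (lollipop k l).Adj j (prev j) := by
    intro j
    rw [lollipop, fromRel_adj]
    have hj := j.isLt
    refine ⟨fun h => ?_, ?_⟩
    · have := congrArg Fin.val h
      simp only [prev] at this
      split_ifs at this <;> omega
    · simp only [prev]
      split_ifs <;> omega
  have hinj : Function.Injective fun j => (⟨s(j, prev j), hadj j⟩ : (lollipop k l).edgeSet) := by
    intro i j hij
    have hi := i.isLt
    have hj := j.isLt
    have h := congrArg Subtype.val hij
    simp only [Sym2.eq_iff, Fin.ext_iff, prev] at h
    ext
    split_ifs at h <;> omega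
  simpa using Nat.card_le_card_of_injective _ hinj

end Lollipop

section Blowup

variable {V : Type*} (H : SimpleGraph V) (p : ℕ)

def blowupClique (e : H.edgeSet) : Set (V ⊕ (H.edgeSet × Fin (p - 1))) :=
  {u | Sum.elim (· ∈ (e : Sym2 V)) (·.1 = e) u}

variable {H p}

@[simp]
lemma mem_blowupClique_inl {e : H.edgeSet} {v : V} :
    Sum.inl v ∈ blowupClique H p e ↔ v ∈ (e : Sym2 V) := Iff.rfl

@[simp]
lemma mem_blowupClique_inr {e : H.edgeSet} {q : H.edgeSet × Fin (p - 1)} :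
    Sum.inr q ∈ blowupClique H p e ↔ q.1 = e := Iff.rfl

lemma isClique_blowupClique (e : H.edgeSet) : (edgeBlowup H p).IsClique (blowupClique H p e) := by
  rintro (a | q) ha (b | r) hb hne
  · have hab : a ≠ b := fun h => hne (congrArg _ h)
    have he : (e : Sym2 V) = s(a, b) := (Sym2.mem_and_mem_iff hab).mp ⟨ha, hb⟩
    exact (mem_edgeSet H).mp (he ▸ e.2)
  · show a ∈ (r.1 : Sym2 V)
    rwa [mem_blowupClique_inr.mp hb]
  · show b ∈ (q.1 : Sym2 V)
    rwa [mem_blowupClique_inr.mp ha]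
  · refine ⟨(mem_blowupClique_inr.mp ha).trans (mem_blowupClique_inr.mp hb).symm, fun h => hne ?_⟩
    exact congrArg _ (Prod.ext ((mem_blowupClique_inr.mp ha).trans
      (mem_blowupClique_inr.mp hb).symm) h)

lemma ncard_blowupClique (hp : 0 < p) (e : H.edgeSet) : (blowupClique H p e).ncard = p + 1 := by
  obtain ⟨⟨a, b⟩, he⟩ := e
  have hab : a ≠ b := H.ne_of_adj he
  have hsplit : blowupClique H p ⟨s(a, b), he⟩ =
      Sum.inl '' {a, b} ∪ Sum.inr '' Set.range (Prod.mk ⟨s(a, b), he⟩) := by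
    ext (v | ⟨e', i⟩) <;> simp [eq_comm]
  rw [hsplit, Set.ncard_union_eq, Set.ncard_image_of_injective _ Sum.inl_injective,
    Set.ncard_pair hab, Set.ncard_image_of_injective _ Sum.inr_injective,
    Set.ncard_range_of_injective (Prod.mk_right_injective _), Nat.card_fin]
  · omega
  · simp [Set.disjoint_left]

lemma blowupClique_inter_subsingleton {e e' : H.edgeSet} (h : e ≠ e') :
    (blowupClique H p e ∩ blowupClique H p e').Subsingleton := by
  rintro (a | q) ⟨ha, ha'⟩ (b | r) ⟨hb, hb'⟩
  · by_contra hne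
    have hab : a ≠ b := fun h => hne (congrArg _ h)
    exact h (Subtype.ext (((Sym2.mem_and_mem_iff hab).mp ⟨ha, hb⟩).trans
      ((Sym2.mem_and_mem_iff hab).mp ⟨ha', hb'⟩).symm))
  all_goals first
    | exact absurd ((mem_blowupClique_inr.mp hb).symm.trans (mem_blowupClique_inr.mp hb')) h
    | exact absurd ((mem_blowupClique_inr.mp ha).symm.trans (mem_blowupClique_inr.mp ha')) h

lemma ncard_setOf_inl_mem_blowupClique (v : V) :
    {e | Sum.inl v ∈ blowupClique H p e}.ncard = (H.neighborSet v).ncard := by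
  classical
  rw [← Nat.card_coe_set_eq, ← Nat.card_coe_set_eq,
    ← Nat.card_congr (H.incidenceSetEquivNeighborSet v)]
  exact Nat.card_congr (Equiv.subtypeSubtypeEquivSubtypeInter (· ∈ H.edgeSet) (v ∈ ·))

end Blowup

section Host

variable {α : Type*} (G : SimpleGraph α) {m : ℕ} (p : ℕ) (x y : Fin m)

abbrev joinTuranAddEdge : SimpleGraph (α ⊕ Fin m) :=
  gJoin G (turanGraph m p) ⊔ fromEdgeSet {s(Sum.inr x, Sum.inr y)}

variable {G p x y}

lemma exists_inl_mem_or_mem_of_isClique (hp : 0 < p) {S : Set (α ⊕ Fin m)}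
    (hS : (joinTuranAddEdge G p x y).IsClique S) (hcard : p < S.ncard) :
    (∃ a, Sum.inl a ∈ S) ∨ (Sum.inr x ∈ S ∧ Sum.inr y ∈ S) := by
  by_contra! h
  obtain ⟨hinl, hxy⟩ := h
  obtain ⟨u, hu, v, hv, hne, huv⟩ := Set.exists_ne_map_eq_of_ncard_lt_of_maps_to
    (t := (Finset.range p : Set ℕ)) (f := Sum.elim (fun _ => 0) (fun c : Fin m => c.val % p))
    (by simpa using hcard) (by
      rintro (a | c) hc
      · exact absurd hc (hinl a)
      · simpa using Nat.mod_lt _ hp)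
  rcases hS hu hv hne with hjoin | hedge
  · rcases u with a | a
    · exact hinl a hu
    rcases v with b | b
    · exact hinl b hv
    exact hjoin huv
  · rw [fromEdgeSet_adj, Set.mem_singleton_iff, Sym2.eq_iff] at hedge
    rcases hedge.1 with ⟨rfl, rfl⟩ | ⟨rfl, rfl⟩
    exacts [hxy hu hv, hxy hv hu]

end Host

section Counting

open Finset

variable {V α : Type*} {H : SimpleGraph V} {p : ℕ}

lemma subsingleton_setOf_mem_image_blowupClique {f : V ⊕ (H.edgeSet × Fin (p - 1)) → α}
    (hf : Function.Injective f) {z w : α} (hzw : z ≠ w) :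
    {e : H.edgeSet | z ∈ f '' blowupClique H p e ∧ w ∈ f '' blowupClique H p e}.Subsingleton := by
  rintro e ⟨⟨u, hu, rfl⟩, ⟨v, hv, rfl⟩⟩ e' ⟨⟨u', hu', hfu⟩, ⟨v', hv', hfv⟩⟩
  rw [hf hfu] at hu'
  rw [hf hfv] at hv'
  by_contra hne
  exact hzw (congrArg f (blowupClique_inter_subsingleton hne ⟨hu, hu'⟩ ⟨hv, hv'⟩))

variable {G : SimpleGraph α} {m : ℕ} {x y : Fin m} {f : V ⊕ (H.edgeSet × Fin (p - 1)) → α ⊕ Fin m}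

lemma exists_inl_or_mem_image_blowupClique (hp : 0 < p) (hf : Function.Injective f)
    (hadj : ∀ ⦃a b⦄, (edgeBlowup H p).Adj a b → (joinTuranAddEdge G p x y).Adj (f a) (f b))
    (e : H.edgeSet) :
    (∃ u ∈ blowupClique H p e, ∃ a, f u = Sum.inl a) ∨
      (Sum.inr x ∈ f '' blowupClique H p e ∧ Sum.inr y ∈ f '' blowupClique H p e) := by
  have hclique : (joinTuranAddEdge G p x y).IsClique (f '' blowupClique H p e) := by
    rintro _ ⟨u, hu, rfl⟩ _ ⟨v, hv, rfl⟩ hne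
    exact hadj (isClique_blowupClique e hu hv fun h => hne (congrArg f h))
  have hcard : p < (f '' blowupClique H p e).ncard := by
    rw [Set.ncard_image_of_injective _ hf, ncard_blowupClique hp]
    omega
  rcases exists_inl_mem_or_mem_of_isClique hp hclique hcard with ⟨a, u, hu, hfu⟩ | h
  exacts [Or.inl ⟨u, hu, a, hfu⟩, Or.inr h]

theorem card_edgeSet_le_of_isCont [Finite V] [Finite α] (c : V)
    (hdeg : ∀ v ≠ c, (H.neighborSet v).ncard ≤ 2) (hc : (H.neighborSet c).ncard ≤ 3)
    (hp : 0 < p) (hxy : x ≠ y) (hH : IsCont (edgeBlowup H p) (joinTuranAddEdge G p x y)) :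
    Nat.card H.edgeSet ≤ 2 * Nat.card α + 2 := by
  classical
  obtain ⟨f, hf, hadj⟩ := hH
  have := Fintype.ofFinite α
  have := Fintype.ofFinite H.edgeSet
  have := Fintype.ofFinite (V ⊕ (H.edgeSet × Fin (p - 1)))
  let A := ({u | ∃ a, f u = Sum.inl a} : Finset _)
  let P := ({e | Sum.inr x ∈ f '' blowupClique H p e ∧ Sum.inr y ∈ f '' blowupClique H p e} :
    Finset H.edgeSet)
  let incident u := ({e | u ∈ blowupClique H p e} : Finset H.edgeSet)
  have hcover : (univ : Finset H.edgeSet) ⊆ P ∪ A.biUnion incident := by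
    intro e _
    rcases exists_inl_or_mem_image_blowupClique hp hf hadj e with ⟨u, hu, hfu⟩ | h
    · exact mem_union_right _
        (mem_biUnion.2 ⟨u, mem_filter.2 ⟨mem_univ _, hfu⟩, mem_filter.2 ⟨mem_univ _, hu⟩⟩)
    · exact mem_union_left _ (mem_filter.2 ⟨mem_univ _, h⟩)
  have hP : #P ≤ 1 := card_le_one.2 fun e he e' he' =>
    subsingleton_setOf_mem_image_blowupClique hf (Sum.inr_injective.ne hxy)
      (by simpa [P] using he) (by simpa [P] using he')
  have hA : #A ≤ Nat.card α := by
    rw [← card_image_of_injective A hf, Nat.card_eq_fintype_card, ← card_univ]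
    refine (card_le_card fun z hz => ?_).trans (card_image_le (f := Sum.inl))
    obtain ⟨u, hu, rfl⟩ := mem_image.1 hz
    obtain ⟨a, ha⟩ := (mem_filter.1 hu).2
    exact mem_image.2 ⟨a, mem_univ _, ha.symm⟩
  have hincident : ∀ u, #(incident u) ≤ 2 + if u = Sum.inl c then 1 else 0 := by
    intro u
    rw [← Set.ncard_coe_finset, coe_filter_univ]
    rcases u with v | q
    · rw [ncard_setOf_inl_mem_blowupClique]
      by_cases hv : v = c
      · simpa [hv] using hc
      · simpa [hv] using hdeg v hv
    · simp
  calc Nat.card H.edgeSet = #(univ : Finset H.edgeSet) := by rw [card_univ, Nat.card_eq_fintype_card]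
    _ ≤ #P + #(A.biUnion incident) := (card_le_card hcover).trans (card_union_le _ _)
    _ ≤ 1 + ∑ u ∈ A, (2 + if u = Sum.inl c then 1 else 0) :=
      add_le_add hP (card_biUnion_le.trans (sum_le_sum fun u _ => hincident u))
    _ = 1 + 2 * #A + if Sum.inl c ∈ A then 1 else 0 := by
      rw [sum_add_distrib, sum_const, sum_ite_eq', smul_eq_mul]
      ring
    _ ≤ 2 * Nat.card α + 2 := by split_ifs <;> omega

end Counting

theorem stmt5_general (k l p t : ℕ) (hk : 4 ≤ k)
    (hp : 2 ≤ p) (ht : t = (k + l - 3) / 2) :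
    ∃ N : ℕ, ∀ n ≥ N, ∀ x y : Fin (n - t), x ≠ y → x.val % p = y.val % p →
      ¬ IsCont (edgeBlowup (lollipop k l) p)
        (Hgraph n p (t + 1) ⊔
          SimpleGraph.fromEdgeSet {s(Sum.inr x, Sum.inr y)}) := by
  refine ⟨0, fun n _ x y hxy _ hcont => ?_⟩
  have hedges := le_card_edgeSet_lollipop (l := l) (by omega : 3 ≤ k)
  have hbound := card_edgeSet_le_of_isCont (⟨0, by omega⟩ : Fin (k + l))
    (fun v hv => ncard_neighborSet_lollipop_le_two fun h => hv (Fin.ext h))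
    (ncard_neighborSet_lollipop_le_three _) (by omega) hxy hcont
  rw [Nat.card_fin] at hbound
  omega

/-- For `k ≥ 4` even, `ℓ ≥ 3` odd, `p ≥ 2`, `t = (k+ℓ-3)/2` and `n`
sufficiently large, every graph `H'(n,p,t+1)` obtained from `K_t ∨ T_p(n-t)` by
adding one extra edge inside one class of the Turán part is `C_{k,ℓ}^{p+1}`-free. -/
theorem stmt5 (k l p t : ℕ) (hk : 4 ≤ k) (hke : Even k) (hl : 3 ≤ l) (hlo : Odd l)
    (hp : 2 ≤ p) (ht : t = (k + l - 3) / 2) :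
    ∃ N : ℕ, ∀ n ≥ N, ∀ x y : Fin (n - t), x ≠ y → x.val % p = y.val % p →
      ¬ IsCont (edgeBlowup (lollipop k l) p)
        (Hgraph n p (t + 1) ⊔
          SimpleGraph.fromEdgeSet {s(Sum.inr x, Sum.inr y)}) :=
  stmt5_general k l p t hk hp ht
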